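/- Let k be a field of characteristic zero, let Ω be the 2-dimensional k-vector space with basis {∗, ·}, let Λ ⊆ (Ω⊗Ω) ⊕ (Ω⊗Ω) be the span of (∗⊗∗, ∗⊗∗) and (·⊗·, ·⊗·) (the 2-associative algebra relation space), and let α : Ω → k be the linear map with α(∗) = α(·) = 1. Then for every ⋆ ∈ Ω, the pair (α, α) is not coherent with Λ; that is, some element of Λ fails at least one of the coherence equations (C1)–(C5) for (α, α, ⋆). -/

import Mathlib

open TensorProduct

section Defs

variable {k : Type*} [Field k]

noncomputable def contrL {Ω : Type*} [AddCommGroup Ω] [Module k Ω]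
    (φ : Module.Dual k Ω) : Ω ⊗[k] Ω →ₗ[k] Ω :=
  (TensorProduct.lid k Ω).toLinearMap ∘ₗ TensorProduct.map φ LinearMap.id

noncomputable def contrR {Ω : Type*} [AddCommGroup Ω] [Module k Ω]
    (φ : Module.Dual k Ω) : Ω ⊗[k] Ω →ₗ[k] Ω :=
  (TensorProduct.rid k Ω).toLinearMap ∘ₗ TensorProduct.map LinearMap.id φ

noncomputable def contrB {Ω₁ Ω₂ : Type*} [AddCommGroup Ω₁] [Module k Ω₁]
    [AddCommGroup Ω₂] [Module k Ω₂]
    (φ : Module.Dual k Ω₁) (ψ : Module.Dual k Ω₂) : Ω₁ ⊗[k] Ω₂ →ₗ[k] k :=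
  (TensorProduct.lid k k).toLinearMap ∘ₗ TensorProduct.map φ ψ

/-- The coherence equations (C1)-(C5) for a pair `uv ∈ (Ω⊗Ω) × (Ω⊗Ω)`. -/
def CoherenceEqs {Ω : Type*} [AddCommGroup Ω] [Module k Ω]
    (α β : Module.Dual k Ω) (star : Ω)
    (uv : (Ω ⊗[k] Ω) × (Ω ⊗[k] Ω)) : Prop :=
  contrL β uv.1 = contrL β uv.2 ∧
  contrL α uv.1 = contrR β uv.2 ∧
  contrR α uv.1 = contrR α uv.2 ∧
  contrR β uv.1 = contrB β β uv.2 • star ∧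
  contrB α α uv.1 • star = contrL α uv.2

/-- The compatibility equations (C1)-(C3). -/
def CompatEqs {Ω : Type*} [AddCommGroup Ω] [Module k Ω]
    (α β : Module.Dual k Ω)
    (uv : (Ω ⊗[k] Ω) × (Ω ⊗[k] Ω)) : Prop :=
  contrL β uv.1 = contrL β uv.2 ∧
  contrL α uv.1 = contrR β uv.2 ∧
  contrR α uv.1 = contrR α uv.2

def IsCoherent {Ω : Type*} [AddCommGroup Ω] [Module k Ω]
    (α β : Module.Dual k Ω) (star : Ω)
    (Λ : Submodule k ((Ω ⊗[k] Ω) × (Ω ⊗[k] Ω))) : Prop :=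
  ∀ uv ∈ Λ, CoherenceEqs α β star uv

def IsCompatible {Ω : Type*} [AddCommGroup Ω] [Module k Ω]
    (α β : Module.Dual k Ω)
    (Λ : Submodule k ((Ω ⊗[k] Ω) × (Ω ⊗[k] Ω))) : Prop :=
  ∀ uv ∈ Λ, CompatEqs α β uv

end Defs

section Contraction

variable {k : Type*} [Field k] {Ω : Type*} [AddCommGroup Ω] [Module k Ω]

@[simp]
theorem contrR_tmul (φ : Module.Dual k Ω) (x y : Ω) : contrR φ (x ⊗ₜ[k] y) = φ y • x := by
  simp [contrR]

@[simp]
theorem contrB_tmul (φ ψ : Module.Dual k Ω) (x y : Ω) :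
    contrB φ ψ (x ⊗ₜ[k] y) = φ x * ψ y := by
  simp [contrB]

/-- Equation (C4) on the relation `(x ⊗ x, x ⊗ x)` reads `β x • x = (β x)² • ⋆`. -/
theorem CoherenceEqs.eq_star_of_tmul_self {α β : Module.Dual k Ω} {star x : Ω}
    (h : CoherenceEqs α β star (x ⊗ₜ[k] x, x ⊗ₜ[k] x)) (hx : β x = 1) : x = star := by
  simpa [hx] using h.2.2.2.1

theorem IsCoherent.eq_star_of_tmul_self_mem {α β : Module.Dual k Ω} {star x : Ω}
    {Λ : Submodule k ((Ω ⊗[k] Ω) × (Ω ⊗[k] Ω))} (h : IsCoherent α β star Λ)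
    (hmem : (x ⊗ₜ[k] x, x ⊗ₜ[k] x) ∈ Λ) (hx : β x = 1) : x = star :=
  (h _ hmem).eq_star_of_tmul_self hx

end Contraction

theorem two_associative_not_coherent_general
    {k : Type*} [Field k]
    {Ω : Type*} [AddCommGroup Ω] [Module k Ω]
    (b : Module.Basis (Fin 2) k Ω)
    (Λ : Submodule k ((Ω ⊗[k] Ω) × (Ω ⊗[k] Ω)))
    (hΛ : Λ = Submodule.span k
      ({(b 0 ⊗ₜ[k] b 0, b 0 ⊗ₜ[k] b 0),
        (b 1 ⊗ₜ[k] b 1, b 1 ⊗ₜ[k] b 1)} :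
        Set ((Ω ⊗[k] Ω) × (Ω ⊗[k] Ω))))
    (α : Module.Dual k Ω) (h0 : α (b 0) = 1) (h1 : α (b 1) = 1) :
    ∀ star : Ω, ¬ IsCoherent α α star Λ := by
  intro star h
  subst hΛ
  have hb0 : b 0 = star := h.eq_star_of_tmul_self_mem (Submodule.subset_span (by simp)) h0
  have hb1 : b 1 = star := h.eq_star_of_tmul_self_mem (Submodule.subset_span (by simp)) h1
  exact b.injective.ne (by decide) (hb0.trans hb1.symm)

/-- The unit action α(∗)=α(·)=1 on the 2-associative relation space is not coherent
for any choice of associative operation ⋆. -/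
theorem two_associative_not_coherent
    {k : Type*} [Field k] [CharZero k]
    {Ω : Type*} [AddCommGroup Ω] [Module k Ω]
    (b : Module.Basis (Fin 2) k Ω)
    (Λ : Submodule k ((Ω ⊗[k] Ω) × (Ω ⊗[k] Ω)))
    (hΛ : Λ = Submodule.span k
      ({(b 0 ⊗ₜ[k] b 0, b 0 ⊗ₜ[k] b 0),
        (b 1 ⊗ₜ[k] b 1, b 1 ⊗ₜ[k] b 1)} :
        Set ((Ω ⊗[k] Ω) × (Ω ⊗[k] Ω))))
    (α : Module.Dual k Ω) (h0 : α (b 0) = 1) (h1 : α (b 1) = 1) :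
    ∀ star : Ω, ¬ IsCoherent α α star Λ :=
  two_associative_not_coherent_general b Λ hΛ α h0 h1
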